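/- Let B₀(x) = e^{−x⁴} sin x. Then: (i) ∂ₓB₀(x) = e^{−x⁴}(cos x − 4x³ sin x), so ∂ₓB₀(0) = 1; (ii) ∂ₓₓB₀(x) = e^{−x⁴}(−sin x − 12x² sin x + 16x⁶ sin x − 8x³ cos x), so ∂ₓₓB₀(0) = 0; (iii) ∂ₓB₀(x) < 1 for every x ≠ 0, i.e. x = 0 is the strict global maximum point of ∂ₓB₀; and (iv) the integral (1/π) ∫_ℝ (1 − ∂ₓB₀(y))/y² dy, which equals Λ∂ₓB₀(0), is finite and strictly positive. -/

import Mathlib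

open MeasureTheory Real Filter Topology Set

noncomputable section


def gfun : ℝ → ℝ := fun x => Real.exp (-x ^ 4) * (Real.cos x - 4 * x ^ 3 * Real.sin x)
def g2fun : ℝ → ℝ := fun x => Real.exp (-x ^ 4) * (-Real.sin x - 12 * x ^ 2 * Real.sin x
          + 16 * x ^ 6 * Real.sin x - 8 * x ^ 3 * Real.cos x)

lemma hasDerivAt_B (x : ℝ) :
    HasDerivAt (fun x : ℝ => Real.exp (-x ^ 4) * Real.sin x) (gfun x) x := by
  have h1 : HasDerivAt (fun x : ℝ => Real.exp (-x ^ 4)) (Real.exp (-x ^ 4) * (-(4 * x ^ 3))) x := by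
    have : HasDerivAt (fun x : ℝ => -x ^ 4) (-(4 * x ^ 3)) x := by
      exact (hasDerivAt_pow 4 x).neg.congr_deriv (by norm_num)
    simpa using this.exp
  have := h1.mul (Real.hasDerivAt_sin x)
  refine this.congr_deriv ?_
  unfold gfun; ring

lemma hasDerivAt_g (x : ℝ) : HasDerivAt gfun (g2fun x) x := by
  have h1 : HasDerivAt (fun x : ℝ => Real.exp (-x ^ 4)) (Real.exp (-x ^ 4) * (-(4 * x ^ 3))) x := by
    have : HasDerivAt (fun x : ℝ => -x ^ 4) (-(4 * x ^ 3)) x := by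
      exact (hasDerivAt_pow 4 x).neg.congr_deriv (by norm_num)
    simpa using this.exp
  have h2 : HasDerivAt (fun x : ℝ => Real.cos x - 4 * x ^ 3 * Real.sin x)
      (-Real.sin x - (12 * x ^ 2 * Real.sin x + 4 * x ^ 3 * Real.cos x)) x := by
    have ha : HasDerivAt (fun x : ℝ => 4 * x ^ 3) (4 * (3 * x ^ 2)) x := by
      simpa [mul_comm, mul_assoc, mul_left_comm] using ((hasDerivAt_pow 3 x).const_mul 4)
    have := (Real.hasDerivAt_cos x).sub (ha.mul (Real.hasDerivAt_sin x))
    exact this.congr_deriv (by ring)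
  have := h1.mul h2
  refine this.congr_deriv ?_
  unfold g2fun; ring

lemma exp_quartic_ge (t : ℝ) : t ^ 12 / 27 ≤ Real.exp (t ^ 4) := by
  have h1 : (0:ℝ) ≤ t ^ 4 / 3 := by positivity
  have h2 : t ^ 4 / 3 ≤ Real.exp (t ^ 4 / 3) := by
    nlinarith [Real.add_one_le_exp (t ^ 4 / 3)]
  have h3 : Real.exp (t ^ 4) = Real.exp (t ^ 4 / 3) ^ 3 := by
    rw [← Real.exp_nat_mul]; congr 1; ring
  rw [h3]
  calc t ^ 12 / 27 = (t ^ 4 / 3) ^ 3 := by ring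
  _ ≤ Real.exp (t ^ 4 / 3) ^ 3 := pow_le_pow_left₀ h1 h2 3

lemma g2_tail {y : ℝ} (hy : 1 ≤ |y|) : |g2fun y| ≤ 1000 / y ^ 4 := by
  have hE0 : (0:ℝ) < Real.exp (-y ^ 4) := Real.exp_pos _
  have h12 : |y| ^ 12 = y ^ 12 := by rw [← abs_pow, abs_of_nonneg]; positivity
  have hy12 : (1:ℝ) ≤ y ^ 12 := by rw [← h12]; exact one_le_pow₀ hy
  have hEb : Real.exp (-y ^ 4) ≤ 27 / y ^ 12 := by
    have := exp_quartic_ge y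
    rw [Real.exp_neg]
    rw [inv_le_comm₀ (Real.exp_pos _) (by positivity), inv_div]
    exact this
  set M : ℝ := 1 + 12 * y ^ 2 + 16 * y ^ 6 + 8 * |y| ^ 3 with hM
  have hM0 : 0 ≤ M := by positivity
  have h1 : |g2fun y| ≤ Real.exp (-y ^ 4) * M := by
    unfold g2fun
    rw [abs_mul, abs_of_pos hE0]
    apply mul_le_mul_of_nonneg_left _ hE0.le
    have e1 : -Real.sin y - 12 * y ^ 2 * Real.sin y + 16 * y ^ 6 * Real.sin y - 8 * y ^ 3 * Real.cos y
        = Real.sin y * (-1 - 12 * y ^ 2 + 16 * y ^ 6) - 8 * y ^ 3 * Real.cos y := by ring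
    rw [e1]
    calc |Real.sin y * (-1 - 12 * y ^ 2 + 16 * y ^ 6) - 8 * y ^ 3 * Real.cos y|
        ≤ |Real.sin y * (-1 - 12 * y ^ 2 + 16 * y ^ 6)| + |8 * y ^ 3 * Real.cos y| := abs_sub _ _
    _ ≤ (1 + 12 * y ^ 2 + 16 * y ^ 6) + 8 * |y| ^ 3 := by
        apply add_le_add
        · rw [abs_mul]
          have hs := Real.abs_sin_le_one y
          have habs : |(-1 - 12 * y ^ 2 + 16 * y ^ 6)| ≤ 1 + 12 * y ^ 2 + 16 * y ^ 6 := by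
            rw [abs_le]; constructor <;> nlinarith [sq_nonneg y, pow_nonneg (sq_nonneg y) 3]
          calc |Real.sin y| * |(-1 - 12 * y ^ 2 + 16 * y ^ 6)|
              ≤ 1 * (1 + 12 * y ^ 2 + 16 * y ^ 6) :=
                mul_le_mul hs habs (abs_nonneg _) one_pos.le
          _ = 1 + 12 * y ^ 2 + 16 * y ^ 6 := one_mul _
        · have e2 : |8 * y ^ 3 * Real.cos y| = 8 * |y| ^ 3 * |Real.cos y| := by
            rw [abs_mul, abs_mul, abs_pow]; norm_num
          rw [e2]
          nlinarith [Real.abs_cos_le_one y, pow_nonneg (abs_nonneg y) 3,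
            abs_nonneg (Real.cos y)]
    _ = M := hM.symm
  have h2 : Real.exp (-y ^ 4) * M ≤ (27 / y ^ 12) * M :=
    mul_le_mul_of_nonneg_right hEb hM0
  have h3 : (27 / y ^ 12) * M ≤ 1000 / y ^ 4 := by
    have hy8 : ∀ k : ℕ, k ≤ 8 → |y| ^ k ≤ y ^ 8 := by
      intro k hk
      have h8 : |y| ^ 8 = y ^ 8 := by rw [← abs_pow, abs_of_nonneg]; positivity
      rw [← h8]
      exact pow_le_pow_right₀ hy hk
    have p0 := hy8 0 (by norm_num)
    have p2 := hy8 2 (by norm_num)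
    have p3 := hy8 3 (by norm_num)
    have p6 := hy8 6 (by norm_num)
    rw [sq_abs] at p2
    have p6' : y ^ 6 ≤ y ^ 8 := by rwa [← abs_pow, abs_of_nonneg (by positivity : (0:ℝ) ≤ y ^ 6)] at p6
    have key : 27 * M ≤ 1000 * y ^ 8 := by
      simp only [pow_zero] at p0
      rw [hM]; nlinarith
    have hy0 : y ≠ 0 := by intro h; rw [h] at hy; norm_num at hy
    rw [div_mul_eq_mul_div, div_le_div_iff₀ (by positivity) (by positivity : (0:ℝ) < y ^ 4)]
    calc 27 * M * y ^ 4 ≤ 1000 * y ^ 8 * y ^ 4 :=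
      mul_le_mul_of_nonneg_right key (by positivity)
    _ = 1000 * y ^ 12 := by ring
    _ = 1000 * y ^ 12 := rfl
  exact h1.trans (h2.trans h3)

lemma gfun_zero : gfun 0 = 1 := by simp [gfun]

lemma gfun_neg (x : ℝ) : gfun (-x) = gfun x := by
  simp only [gfun, Real.cos_neg, Real.sin_neg]
  ring_nf

lemma gfun_lt_one_pos {x : ℝ} (hx : 0 < x) : gfun x < 1 := by
  have hE : (0:ℝ) < Real.exp (-x ^ 4) := Real.exp_pos _
  have key : Real.cos x - 4 * x ^ 3 * Real.sin x < Real.exp (x ^ 4) := by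
    rcases le_or_gt x 1 with h1 | h1
    · have hs := Real.sin_gt_sub_cube hx
      have hc := Real.cos_le_one x
      have he := Real.add_one_le_exp (x ^ 4)
      nlinarith [mul_lt_mul_of_pos_left hs (show (0:ℝ) < 4 * x ^ 3 by positivity),
        pow_pos hx 4, pow_le_pow_of_le_one hx.le h1 (show 4 ≤ 6 by norm_num)]
    · rcases le_or_gt x 3 with h3 | h3
      · have hs : 0 < Real.sin x := by
          apply Real.sin_pos_of_pos_of_lt_pi hx
          calc x ≤ 3 := h3
          _ < π := Real.pi_gt_three
        have hc := Real.cos_le_one x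
        have he : (1:ℝ) ≤ Real.exp (x ^ 4) := Real.one_le_exp (by positivity)
        nlinarith [pow_pos (lt_trans one_pos h1) 3]
      · have hs : -1 ≤ Real.sin x := Real.neg_one_le_sin x
        have hc := Real.cos_le_one x
        have he : x ^ 12 / 27 ≤ Real.exp (x ^ 4) := exp_quartic_ge x
        have h39 : (3:ℝ) ^ 9 ≤ x ^ 9 := pow_le_pow_left₀ (by norm_num) h3.le 9
        nlinarith [mul_le_mul_of_nonneg_left (show -Real.sin x ≤ 1 by linarith)
          (show (0:ℝ) ≤ 4 * x ^ 3 by positivity),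
          mul_le_mul_of_nonneg_left h39 (pow_nonneg (by linarith : (0:ℝ) ≤ x) 3),
          (show (27:ℝ) ≤ x ^ 3 from by nlinarith [pow_le_pow_left₀ (show (0:ℝ) ≤ 3 by norm_num) h3.le 3])]
  calc gfun x = Real.exp (-x ^ 4) * (Real.cos x - 4 * x ^ 3 * Real.sin x) := rfl
  _ < Real.exp (-x ^ 4) * Real.exp (x ^ 4) := by exact (mul_lt_mul_iff_right₀ hE).2 key
  _ = 1 := by rw [← Real.exp_add]; simp

lemma gfun_lt_one {x : ℝ} (hx : x ≠ 0) : gfun x < 1 := by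
  rcases lt_or_gt_of_ne hx with h | h
  · rw [← gfun_neg]; exact gfun_lt_one_pos (by linarith)
  · exact gfun_lt_one_pos h

lemma gfun_le_one (x : ℝ) : gfun x ≤ 1 := by
  rcases eq_or_ne x 0 with rfl | h
  · rw [gfun_zero]
  · exact (gfun_lt_one h).le

lemma exp_inv_mul_le (t : ℝ) (ht : 0 ≤ t) : Real.exp (-t) * (1 + t) ≤ 1 := by
  have h := Real.add_one_le_exp t
  have hE : 0 < Real.exp t := Real.exp_pos t
  rw [Real.exp_neg]
  rw [inv_mul_le_iff₀ hE]
  nlinarith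

lemma near_bound {y : ℝ} (hy : |y| ≤ 1) : 1 - gfun y ≤ 6 * y ^ 2 := by
  have hy2 : y ^ 2 ≤ 1 := by
    have := abs_nonneg y
    nlinarith [sq_abs y]
  have hE0 : (0:ℝ) < Real.exp (-y ^ 4) := Real.exp_pos _
  have hE1 : 1 - y ^ 4 ≤ Real.exp (-y ^ 4) := by nlinarith [Real.add_one_le_exp (-y ^ 4)]
  have hE2 : Real.exp (-y ^ 4) ≤ 1 := Real.exp_le_one_iff.mpr (neg_nonpos.mpr (by positivity))
  have hc1 : 1 - y ^ 2 / 2 ≤ Real.cos y := Real.one_sub_sq_div_two_le_cos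
  have hc0 : (0:ℝ) ≤ 1 - y ^ 2 / 2 := by nlinarith
  have hy4 : y ^ 4 ≤ y ^ 2 := by nlinarith [sq_nonneg y, sq_nonneg (y^2)]
  have hE14 : (0:ℝ) ≤ 1 - y ^ 4 := by nlinarith
  have hs : y * Real.sin y ≤ y ^ 2 := by
    calc y * Real.sin y ≤ |y * Real.sin y| := le_abs_self _
    _ = |y| * |Real.sin y| := abs_mul _ _
    _ ≤ |y| * |y| := by
        have := Real.abs_sin_le_abs (x := y)
        exact mul_le_mul_of_nonneg_left this (abs_nonneg y)
    _ = y ^ 2 := by rw [← abs_mul]; rw [abs_of_nonneg (by nlinarith [sq_nonneg y] : (0:ℝ) ≤ y * y)]; ring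
  -- key products
  have hprod : (1 - y ^ 4) * (1 - y ^ 2 / 2) ≤ Real.exp (-y ^ 4) * Real.cos y :=
    mul_le_mul hE1 hc1 hc0 hE0.le
  have hterm : 4 * y ^ 3 * Real.exp (-y ^ 4) * Real.sin y ≤ 4 * y ^ 2 * Real.exp (-y ^ 4) * y ^ 2 := by
    have := mul_le_mul_of_nonneg_left hs (show (0:ℝ) ≤ 4 * y ^ 2 * Real.exp (-y ^ 4) by positivity)
    calc 4 * y ^ 3 * Real.exp (-y ^ 4) * Real.sin y
        = 4 * y ^ 2 * Real.exp (-y ^ 4) * (y * Real.sin y) := by ring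
    _ ≤ 4 * y ^ 2 * Real.exp (-y ^ 4) * y ^ 2 := this
  have expand : 1 - gfun y
      = 1 - Real.exp (-y ^ 4) * Real.cos y + 4 * y ^ 3 * Real.exp (-y ^ 4) * Real.sin y := by
    unfold gfun; ring
  rw [expand]
  nlinarith [mul_le_mul_of_nonneg_left hy2 (show (0:ℝ) ≤ 4 * y ^ 2 * Real.exp (-y ^ 4) by positivity),
    mul_le_mul_of_nonneg_left hE2 (show (0:ℝ) ≤ 4 * y ^ 2 * y ^ 2 by positivity)]

lemma cube_le (y : ℝ) : |y| ^ 3 ≤ 1 + y ^ 4 := by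
  have h := abs_nonneg y
  nlinarith [sq_abs y, sq_nonneg (|y| ^ 2 - |y|), sq_nonneg (|y| - 1), sq_nonneg (|y| ^ 2 - 1)]

lemma gfun_abs_le (y : ℝ) : |gfun y| ≤ 5 := by
  have hE0 : (0:ℝ) < Real.exp (-y ^ 4) := Real.exp_pos _
  have h1 : |gfun y| ≤ Real.exp (-y ^ 4) * (1 + 4 * |y| ^ 3) := by
    unfold gfun
    rw [abs_mul, abs_of_pos hE0]
    apply mul_le_mul_of_nonneg_left _ hE0.le
    calc |Real.cos y - 4 * y ^ 3 * Real.sin y| ≤ |Real.cos y| + |4 * y ^ 3 * Real.sin y| :=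
        abs_sub _ _
    _ ≤ 1 + 4 * |y| ^ 3 := by
        have h2 : |4 * y ^ 3 * Real.sin y| = 4 * |y| ^ 3 * |Real.sin y| := by
          rw [abs_mul, abs_mul, abs_pow]; norm_num
        rw [h2]
        have := Real.abs_cos_le_one y
        have hs := Real.abs_sin_le_one y
        nlinarith [pow_nonneg (abs_nonneg y) 3]
  have h2 : Real.exp (-y ^ 4) * (1 + 4 * |y| ^ 3) ≤ Real.exp (-y ^ 4) * (4 * (1 + y ^ 4) + 1) := by
    apply mul_le_mul_of_nonneg_left _ hE0.le
    nlinarith [cube_le y]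
  have h3 : Real.exp (-y ^ 4) * (4 * (1 + y ^ 4) + 1) ≤ 4 * 1 + 1 := by
    have h4 := exp_inv_mul_le (y ^ 4) (by positivity)
    have h5 : Real.exp (-y ^ 4) ≤ 1 := by
      exact Real.exp_le_one_iff.mpr (neg_nonpos.mpr (by positivity))
    nlinarith
  linarith
def Ffun : ℝ → ℝ := fun y => (1 - gfun y) / y ^ 2
def psifun : ℝ → ℝ := fun y => (1 - gfun y) / y
def dpsi : ℝ → ℝ := fun y => -g2fun y / y - Ffun y

lemma gfun_cont : Continuous gfun := by unfold gfun; fun_prop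
lemma g2fun_cont : Continuous g2fun := by unfold g2fun; fun_prop

lemma Ffun_meas : Measurable Ffun :=
  ((measurable_const.sub gfun_cont.measurable).div ((measurable_id.pow_const 2)))

lemma dpsi_meas : Measurable dpsi :=
  ((g2fun_cont.measurable.neg.div measurable_id).sub Ffun_meas)

lemma one_sub_g_nonneg (y : ℝ) : 0 ≤ 1 - gfun y := by linarith [gfun_le_one y]

lemma one_sub_g_le (y : ℝ) : 1 - gfun y ≤ 6 := by
  have h := gfun_abs_le y
  have := abs_le.1 h
  linarith [this.1]

lemma Ffun_nonneg (y : ℝ) : 0 ≤ Ffun y :=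
  div_nonneg (one_sub_g_nonneg y) (sq_nonneg y)

lemma Ffun_le_six (y : ℝ) : Ffun y ≤ 6 := by
  rcases eq_or_ne y 0 with rfl | hy
  · simp [Ffun, gfun_zero]
  · have hy2 : (0:ℝ) < y ^ 2 := by positivity
    rw [Ffun, div_le_iff₀ hy2]
    rcases le_or_gt (|y|) 1 with h | h
    · have := near_bound h
      linarith
    · have h2 : (1:ℝ) ≤ y ^ 2 := by nlinarith [sq_abs y, abs_nonneg y]
      nlinarith [one_sub_g_le y]

lemma Ffun_even (y : ℝ) : Ffun (-y) = Ffun y := by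
  unfold Ffun; rw [gfun_neg, neg_pow]; norm_num

lemma Ffun_le_div {y : ℝ} (hy : 0 < y) : Ffun y ≤ 6 / y ^ 2 := by
  rw [Ffun, div_le_div_iff₀ (by positivity) (by positivity)]
  nlinarith [one_sub_g_le y]

lemma int_inv_sq : IntegrableOn (fun y : ℝ => (y ^ 2)⁻¹) (Ioi (1:ℝ)) := by
  have h := integrableOn_Ioi_rpow_of_lt (show (-2:ℝ) < -1 by norm_num) (show (0:ℝ) < 1 by norm_num)
  apply h.congr_fun _ measurableSet_Ioi
  intro x hx
  have hx0 : (0:ℝ) < x := lt_trans one_pos hx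
  show x ^ (-2:ℝ) = (x ^ 2)⁻¹
  rw [Real.rpow_neg hx0.le, show (2:ℝ) = ((2:ℕ):ℝ) by norm_num, Real.rpow_natCast]

lemma integrableOn_neg_transfer {f : ℝ → ℝ} {s : Set ℝ} (hf : IntegrableOn f s)
    (hev : ∀ y, f (-y) = f y) : IntegrableOn f ((fun y : ℝ => -y) ⁻¹' s) := by
  have h := (MeasurePreserving.integrableOn_comp_preimage
    (Measure.measurePreserving_neg (volume : Measure ℝ))
    (Homeomorph.neg ℝ).measurableEmbedding).2 hf
  have : (f ∘ fun x : ℝ => -x) = f := by funext y; simp [Function.comp, hev]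
  rwa [this] at h

lemma F_int_Ioi1 : IntegrableOn Ffun (Ioi (1:ℝ)) := by
  apply Integrable.mono' (int_inv_sq.const_mul 6) (Ffun_meas.aestronglyMeasurable)
  rw [ae_restrict_iff' measurableSet_Ioi]
  apply Eventually.of_forall
  intro y hy
  have hy0 : (0:ℝ) < y := lt_trans one_pos hy
  rw [Real.norm_eq_abs, abs_of_nonneg (Ffun_nonneg y)]
  calc Ffun y ≤ 6 / y ^ 2 := Ffun_le_div hy0
  _ = 6 * (y ^ 2)⁻¹ := by ring

lemma F_int : Integrable Ffun := by
  have hIcc : IntegrableOn Ffun (Icc (-1:ℝ) 1) := by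
    apply Integrable.mono' (g := fun _ => (6:ℝ)) _ (Ffun_meas.aestronglyMeasurable)
    · apply Eventually.of_forall
      intro y
      rw [Real.norm_eq_abs, abs_of_nonneg (Ffun_nonneg y)]
      exact Ffun_le_six y
    · exact integrableOn_const (by simp [Real.volume_Icc])
  have hIio : IntegrableOn Ffun (Iio (-1:ℝ)) := by
    have h := integrableOn_neg_transfer F_int_Ioi1 Ffun_even
    have hs : (fun y : ℝ => -y) ⁻¹' Ioi (1:ℝ) = Iio (-1:ℝ) := by
      ext y; simp [lt_neg]
    rwa [hs] at h
  rw [← integrableOn_univ]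
  have hcov : (univ : Set ℝ) ⊆ Iio (-1) ∪ (Icc (-1) 1 ∪ Ioi 1) := by
    intro y _
    simp only [mem_union, mem_Iio, mem_Icc, mem_Ioi]
    rcases lt_or_ge y (-1) with h | h
    · exact Or.inl h
    · rcases le_or_gt y 1 with h2 | h2
      · exact Or.inr (Or.inl ⟨h, h2⟩)
      · exact Or.inr (Or.inr h2)
  exact ((hIio.union (hIcc.union F_int_Ioi1))).mono_set hcov

lemma F_integral_pos : 0 < ∫ y, Ffun y := by
  rw [integral_pos_iff_support_of_nonneg Ffun_nonneg F_int]
  have hs : Ioi (0:ℝ) ⊆ Function.support Ffun := by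
    intro y hy
    have hy0 : y ≠ 0 := ne_of_gt hy
    exact ne_of_gt (div_pos (by linarith [gfun_lt_one hy0]) (by positivity))
  calc (0:ENNReal) < volume (Ioi (0:ℝ)) := by rw [Real.volume_Ioi]; exact ENNReal.zero_lt_top
  _ ≤ volume (Function.support Ffun) := measure_mono hs

lemma psifun_hasDeriv {y : ℝ} (hy : y ≠ 0) : HasDerivAt psifun (dpsi y) y := by
  have h := ((hasDerivAt_const y (1:ℝ)).sub (hasDerivAt_g y)).div (hasDerivAt_id y) hy
  refine h.congr_deriv ?_
  simp only [id, Pi.sub_apply]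
  unfold dpsi Ffun
  field_simp
  ring

lemma psifun_tendsto_atTop : Tendsto psifun atTop (𝓝 (0:ℝ)) := by
  apply squeeze_zero_norm' _ ((tendsto_const_nhds (x := (6:ℝ))).div_atTop tendsto_id)
  filter_upwards [eventually_ge_atTop (1:ℝ)] with y hy
  have hy0 : (0:ℝ) < y := lt_of_lt_of_le one_pos hy
  rw [Real.norm_eq_abs, psifun, abs_div, abs_of_nonneg (one_sub_g_nonneg y), abs_of_pos hy0]
  simp only [id]
  gcongr
  exact one_sub_g_le y

lemma dpsi_bound {y : ℝ} (hy : 1 ≤ y) : ‖dpsi y‖ ≤ 1006 * (y ^ 2)⁻¹ := by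
  have hy0 : (0:ℝ) < y := lt_of_lt_of_le one_pos hy
  have h1 : ‖dpsi y‖ ≤ ‖-g2fun y / y‖ + ‖Ffun y‖ := norm_sub_le _ _
  have h2 : ‖-g2fun y / y‖ ≤ 1000 / y ^ 2 := by
    rw [norm_div, norm_neg, Real.norm_eq_abs, Real.norm_eq_abs, abs_of_pos hy0]
    have hg := g2_tail (show 1 ≤ |y| by rwa [abs_of_pos hy0])
    have e1 : |g2fun y| / y ≤ (1000 / y ^ 4) / y := by gcongr
    have e2 : (1000 / y ^ 4) / y = 1000 / y ^ 5 := by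
      rw [div_div]; ring_nf
    have e3 : (1000:ℝ) / y ^ 5 ≤ 1000 / y ^ 2 :=
      div_le_div_of_nonneg_left (by norm_num) (by positivity)
        (pow_le_pow_right₀ hy (by norm_num))
    calc |g2fun y| / y ≤ (1000 / y ^ 4) / y := e1
    _ = 1000 / y ^ 5 := e2
    _ ≤ 1000 / y ^ 2 := e3
  have h3 : ‖Ffun y‖ ≤ 6 / y ^ 2 := by
    rw [Real.norm_eq_abs, abs_of_nonneg (Ffun_nonneg y)]; exact Ffun_le_div hy0
  have h4 : (1000:ℝ) / y ^ 2 + 6 / y ^ 2 = 1006 * (y ^ 2)⁻¹ := by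
    rw [← add_div, div_eq_mul_inv]; norm_num
  linarith

lemma dpsi_int {ε : ℝ} (h0 : 0 < ε) (h1 : ε ≤ 1) : IntegrableOn dpsi (Ioi ε) := by
  have hu : Ioc ε 1 ∪ Ioi 1 = Ioi ε := Ioc_union_Ioi_eq_Ioi h1
  rw [← hu]
  apply IntegrableOn.union
  · have hc : ContinuousOn dpsi (Icc ε 1) := by
      have c1 : ContinuousOn (fun y : ℝ => -g2fun y / y) (Icc ε 1) :=
        (g2fun_cont.neg.continuousOn).div continuousOn_id
          (fun y hy => ne_of_gt (lt_of_lt_of_le h0 hy.1))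
      have c2 : ContinuousOn Ffun (Icc ε 1) :=
        ((continuous_const.sub gfun_cont).continuousOn).div ((continuous_pow 2).continuousOn)
          (fun y hy => by
            have : (0:ℝ) < y := lt_of_lt_of_le h0 hy.1
            positivity)
      exact c1.sub c2
    exact (hc.integrableOn_Icc).mono_set Ioc_subset_Icc_self
  · apply Integrable.mono' ((int_inv_sq).const_mul 1006) dpsi_meas.aestronglyMeasurable
    rw [ae_restrict_iff' measurableSet_Ioi]
    exact Eventually.of_forall fun y hy => dpsi_bound (le_of_lt hy)

lemma f_decomp : (fun y : ℝ => g2fun y / ((0:ℝ) - y)) = fun y => dpsi y + Ffun y := by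
  funext y
  have h : dpsi y + Ffun y = -g2fun y / y := by unfold dpsi; ring
  rw [h, zero_sub, div_neg, neg_div]

lemma Ioi_part {ε : ℝ} (h0 : 0 < ε) (h1 : ε ≤ 1) :
    ∫ y in Ioi ε, g2fun y / ((0:ℝ) - y) = (gfun ε - 1) / ε + ∫ y in Ioi ε, Ffun y := by
  rw [f_decomp]
  rw [integral_add (dpsi_int h0 h1) (F_int.integrableOn)]
  congr 1
  have h := integral_Ioi_of_hasDerivAt_of_tendsto' (a := ε) (f := psifun) (f' := dpsi)
    (fun y hy => psifun_hasDeriv (ne_of_gt (lt_of_lt_of_le h0 hy)))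
    (dpsi_int h0 h1) psifun_tendsto_atTop
  rw [h, zero_sub]
  show -psifun ε = (gfun ε - 1) / ε
  unfold psifun
  rw [← neg_div, neg_sub]

lemma g2fun_neg (y : ℝ) : g2fun (-y) = -g2fun y := by
  simp only [g2fun, Real.cos_neg, Real.sin_neg]
  ring_nf

lemma even_f (y : ℝ) : g2fun (-y) / ((0:ℝ) - (-y)) = g2fun y / ((0:ℝ) - y) := by
  rw [g2fun_neg, zero_sub, zero_sub, neg_neg, neg_div, div_neg]

lemma union_int {ε : ℝ} (h0 : 0 < ε) {f : ℝ → ℝ} (hev : ∀ y, f (-y) = f y)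
    (hf : IntegrableOn f (Ioi ε)) :
    IntegrableOn f (Iio (-ε)) ∧
      ∫ y in Iio (-ε) ∪ Ioi ε, f y = 2 * ∫ y in Ioi ε, f y := by
  have hneg : IntegrableOn f (Iio (-ε)) := by
    have h := integrableOn_neg_transfer hf hev
    have hs : (fun y : ℝ => -y) ⁻¹' Ioi ε = Iio (-ε) := by ext y; simp [lt_neg]
    rwa [hs] at h
  refine ⟨hneg, ?_⟩
  have hdisj : Disjoint (Iio (-ε)) (Ioi ε) := by
    rw [Set.disjoint_left]; intro y hy1 hy2
    simp only [mem_Iio, mem_Ioi] at hy1 hy2; linarith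
  rw [setIntegral_union hdisj measurableSet_Ioi hneg hf]
  have hsym : ∫ y in Iio (-ε), f y = ∫ y in Ioi ε, f y := by
    rw [setIntegral_congr_set Iio_ae_eq_Iic, ← integral_comp_neg_Ioi]
    exact setIntegral_congr_fun measurableSet_Ioi (fun x _ => hev x)
  rw [hsym]; ring

lemma Sset_eq (ε : ℝ) : {y : ℝ | ε < |(0:ℝ) - y|} = Iio (-ε) ∪ Ioi ε := by
  ext y
  simp only [mem_setOf_eq, zero_sub, abs_neg, mem_union, mem_Iio, mem_Ioi, lt_abs]
  constructor
  · rintro (h | h)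
    exacts [Or.inr h, Or.inl (by linarith)]
  · rintro (h | h)
    exacts [Or.inr (by linarith), Or.inl h]

lemma Scompl (ε : ℝ) : (Iio (-ε) ∪ Ioi ε)ᶜ = Icc (-ε) ε := by
  rw [compl_union, compl_Iio, compl_Ioi, Ici_inter_Iic]

lemma key_identity {ε : ℝ} (h0 : 0 < ε) (h1 : ε ≤ 1) :
    ∫ y in {y : ℝ | ε < |(0:ℝ) - y|}, g2fun y / ((0:ℝ) - y)
      = 2 * ((gfun ε - 1) / ε) + ((∫ y, Ffun y) - ∫ y in Icc (-ε) ε, Ffun y) := by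
  rw [Sset_eq]
  have hfint : IntegrableOn (fun y : ℝ => g2fun y / ((0:ℝ) - y)) (Ioi ε) := by
    rw [f_decomp]; exact (dpsi_int h0 h1).add F_int.integrableOn
  obtain ⟨hneg, hun⟩ := union_int h0 even_f hfint
  obtain ⟨-, hunF⟩ := union_int h0 Ffun_even F_int.integrableOn
  rw [hun, Ioi_part h0 h1]
  have hcompl : (∫ y, Ffun y)
      = (∫ y in Iio (-ε) ∪ Ioi ε, Ffun y) + ∫ y in Icc (-ε) ε, Ffun y := by
    conv_rhs => rw [← Scompl]
    exact (integral_add_compl (measurableSet_Iio.union measurableSet_Ioi) F_int).symm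
  rw [hunF] at hcompl
  linarith

lemma slope_tendsto : Tendsto (fun ε : ℝ => (gfun ε - 1) / ε) (𝓝[>] 0) (𝓝 0) := by
  have hd : HasDerivAt gfun 0 0 := by
    have := hasDerivAt_g 0
    simpa [g2fun] using this
  have h := hasDerivAt_iff_tendsto_slope.mp hd
  have hsub : (𝓝[>] (0:ℝ)) ≤ (𝓝[≠] (0:ℝ)) :=
    nhdsWithin_mono 0 (fun x (hx : x ∈ Ioi (0:ℝ)) => by
      simp only [mem_compl_iff, mem_singleton_iff]
      exact ne_of_gt hx)
  have h2 := h.mono_left hsub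
  apply h2.congr
  intro ε
  rw [slope_def_field, gfun_zero, sub_zero]

lemma small_tendsto : Tendsto (fun ε : ℝ => ∫ y in Icc (-ε) ε, Ffun y) (𝓝[>] 0) (𝓝 0) := by
  have hlin : Tendsto (fun ε : ℝ => 12 * ε) (𝓝[>] (0:ℝ)) (𝓝 0) := by
    have h : Tendsto (fun ε : ℝ => 12 * ε) (𝓝 0) (𝓝 (12 * 0)) :=
      (continuous_const.mul continuous_id).tendsto 0
    simpa using h.mono_left nhdsWithin_le_nhds
  apply squeeze_zero_norm' _ hlin
  filter_upwards [self_mem_nhdsWithin] with ε (hε : ε ∈ Ioi (0:ℝ))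
  simp only [mem_Ioi] at hε
  have hb : ‖∫ y in Icc (-ε) ε, Ffun y‖ ≤ 6 * (volume (Icc (-ε) ε)).toReal := by
    apply norm_setIntegral_le_of_norm_le_const measure_Icc_lt_top
    intro x _
    rw [Real.norm_eq_abs, abs_of_nonneg (Ffun_nonneg x)]
    exact Ffun_le_six x
  have hv : (volume (Icc (-ε) ε)).toReal = 2 * ε := by
    rw [Real.volume_Icc, ENNReal.toReal_ofReal (by linarith)]
    ring
  rw [hv] at hb
  linarith

lemma main_tendsto :
    Tendsto (fun ε : ℝ => (1 / π) * ∫ y in {y : ℝ | ε < |(0:ℝ) - y|}, g2fun y / ((0:ℝ) - y))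
      (𝓝[>] 0) (𝓝 ((1 / π) * ∫ y, Ffun y)) := by
  apply Tendsto.const_mul
  have hlim : Tendsto
      (fun ε : ℝ => 2 * ((gfun ε - 1) / ε) + ((∫ y, Ffun y) - ∫ y in Icc (-ε) ε, Ffun y))
      (𝓝[>] 0) (𝓝 (2 * 0 + ((∫ y, Ffun y) - 0))) :=
    (slope_tendsto.const_mul 2).add (tendsto_const_nhds.sub small_tendsto)
  have heq : (fun ε : ℝ => 2 * ((gfun ε - 1) / ε) + ((∫ y, Ffun y) - ∫ y in Icc (-ε) ε, Ffun y))
      =ᶠ[𝓝[>] (0:ℝ)]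
      (fun ε : ℝ => ∫ y in {y : ℝ | ε < |(0:ℝ) - y|}, g2fun y / ((0:ℝ) - y)) := by
    filter_upwards [Ioo_mem_nhdsGT_of_mem
      (show (0:ℝ) ∈ Ico (0:ℝ) 1 from ⟨le_refl 0, one_pos⟩)] with ε hε
    exact (key_identity hε.1 hε.2.le).symm
  have := hlim.congr' heq
  simpa using this


/-- The Hilbert transform `Hf(x) = (1/π) P.V. ∫ f(y)/(x-y) dy`. -/
def hilbert (f : ℝ → ℝ) (x : ℝ) : ℝ :=
  limUnder (𝓝[>] (0:ℝ))
    (fun ε => (1 / π) * ∫ y in {y : ℝ | ε < |x - y|}, f y / (x - y))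

/-- The operator `Λ = H ∂ₓ = (-d²/dx²)^{1/2}`. -/
def lamOp (f : ℝ → ℝ) : ℝ → ℝ := fun x => hilbert (deriv f) x

/-- an explicit blowup profile. For `B₀(x) = e^{-x⁴} sin x`:
(i) `∂ₓB₀(x) = e^{-x⁴}(cos x - 4x³ sin x)`, so `∂ₓB₀(0) = 1`;
(ii) `∂ₓₓB₀(x) = e^{-x⁴}(-sin x - 12x² sin x + 16x⁶ sin x - 8x³ cos x)`, so `∂ₓₓB₀(0) = 0`;
(iii) `∂ₓB₀(x) < 1` for all `x ≠ 0`;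
(iv) `(1/π)∫ (1 - ∂ₓB₀(y))/y² dy`, which equals `Λ∂ₓB₀(0)`, is finite and positive. -/
theorem explicit_profile_satisfies_blowup_conditions
    (B₀ : ℝ → ℝ) (hB₀ : ∀ x, B₀ x = Real.exp (-x ^ 4) * Real.sin x) :
    (∀ x, deriv B₀ x = Real.exp (-x ^ 4) * (Real.cos x - 4 * x ^ 3 * Real.sin x)) ∧
    deriv B₀ 0 = 1 ∧
    (∀ x, deriv (deriv B₀) x
      = Real.exp (-x ^ 4) * (-Real.sin x - 12 * x ^ 2 * Real.sin x
          + 16 * x ^ 6 * Real.sin x - 8 * x ^ 3 * Real.cos x)) ∧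
    deriv (deriv B₀) 0 = 0 ∧
    (∀ x : ℝ, x ≠ 0 → deriv B₀ x < 1) ∧
    MeasureTheory.Integrable (fun y : ℝ => (1 - deriv B₀ y) / y ^ 2) ∧
    0 < (1 / π) * ∫ y : ℝ, (1 - deriv B₀ y) / y ^ 2 ∧
    lamOp (deriv B₀) 0 = (1 / π) * ∫ y : ℝ, (1 - deriv B₀ y) / y ^ 2 := by
  have hBeq : B₀ = fun x => Real.exp (-x ^ 4) * Real.sin x := funext hB₀
  have hd1 : deriv B₀ = gfun := by
    funext x; rw [hBeq]; exact (hasDerivAt_B x).deriv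
  have hd2 : deriv (deriv B₀) = g2fun := by
    rw [hd1]; funext x; exact (hasDerivAt_g x).deriv
  refine ⟨?_, ?_, ?_, ?_, ?_, ?_, ?_, ?_⟩
  · intro x; rw [hd1]; rfl
  · rw [hd1]; exact gfun_zero
  · intro x; rw [hd2]; rfl
  · rw [hd2]; simp [g2fun]
  · intro x hx; rw [hd1]; exact gfun_lt_one hx
  · rw [hd1]; exact F_int
  · rw [hd1]
    exact mul_pos (div_pos one_pos Real.pi_pos) F_integral_pos
  · unfold lamOp hilbert
    rw [hd2, hd1]
    exact main_tendsto.limUnder_eq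

end
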